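/- Let μ and (μ_n) be admissible Borel probability measures on the space Γ of lines of the plane such that μ_n converges weakly to μ. Then for every compact set K ⊆ ℝ² whose topological boundary ∂K satisfies area_μ(∂K) = 0, one has area_{μ_n}(K) → area_μ(K) as n → ∞. -/

import Mathlib

/-! Weak convergence `μs n → μ` gives weak convergence `μs n ⊗ μs n → μ ⊗ μ`, so by the
portmanteau theorem `(μs n ⊗ μs n)(S) → (μ ⊗ μ)(S)` for the set `S` of pairs of distinct lines
meeting in `K`, provided `(μ ⊗ μ)(∂S) = 0`. The intersection point of two non-parallel lines
depends continuously on them (Cramer's rule), and for compact `K` the pairs of lines meeting in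
`K` form a closed set. Hence `∂S` consists of pairs of equal lines, a null set because `μ`
charges no pencil of lines through a point, and of pairs of distinct lines meeting on `∂K`,
a null set because `area_μ(∂K) = 0`. -/

noncomputable section

open MeasureTheory Real

instance : MeasurableSpace Real.Angle :=
  inferInstanceAs (MeasurableSpace (AddCircle (2 * π)))

/-- The space `Γ = (ℝ/2πℤ) × ℝ` parameterizing the lines of the Euclidean plane. -/
abbrev LineSpace : Type := Real.Angle × ℝ

/-- The line `ℓ(θ, p) = {z : z₁ sin θ − z₂ cos θ = p}` corresponding to `(θ, p) ∈ Γ`. -/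
def lineOf (γ : LineSpace) : Set (ℝ × ℝ) :=
  {z : ℝ × ℝ | z.1 * γ.1.sin - z.2 * γ.1.cos = γ.2}

/-- `Γ_A`: the set of (parameters of) lines meeting a given subset `A` of the plane. -/
def linesMeeting (A : Set (ℝ × ℝ)) : Set LineSpace :=
  {γ : LineSpace | (lineOf γ ∩ A).Nonempty}

/-- A Borel measure `μ` on the space of lines is *admissible* if it is invariant under
the involution `(θ, p) ↦ (θ + π, −p)` reversing orientations, is finite on compact sets,
and gives measure zero to the set of lines through any given point of the plane. -/
def Admissible (μ : Measure LineSpace) : Prop :=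
  μ.map (fun γ : LineSpace => (γ.1 + ((π : ℝ) : Real.Angle), -γ.2)) = μ ∧
    (∀ K : Set LineSpace, IsCompact K → μ K < ⊤) ∧
    (∀ z : ℝ × ℝ, μ (linesMeeting {z}) = 0)

/-- The pseudo-distance `d_μ(x, y) = (1/4)·μ(Γ_{[x,y]})` induced by a measure `μ` on the
space of lines. -/
def lineDist (μ : Measure LineSpace) (x y : ℝ × ℝ) : ℝ :=
  (μ (linesMeeting (segment ℝ x y))).toReal / 4

/-- The area `area_μ(A) = (1/(8π))·(μ ⊗ μ)({pairs of distinct lines meeting inside A})`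
induced by a measure `μ` on the space of lines (the Santaló+Blaschke area). -/
def lineArea (μ : Measure LineSpace) (A : Set (ℝ × ℝ)) : ℝ :=
  ((μ.prod μ) {γ : LineSpace × LineSpace |
      lineOf γ.1 ≠ lineOf γ.2 ∧ (lineOf γ.1 ∩ lineOf γ.2 ∩ A).Nonempty}).toReal / (8 * π)

/-- Weak convergence of a sequence of measures: convergence of the integrals of all
bounded continuous functions. -/
def WeakTendsto (μs : ℕ → Measure LineSpace) (μ : Measure LineSpace) : Prop :=
  ∀ f : BoundedContinuousFunction LineSpace ℝ,
    Filter.Tendsto (fun n => ∫ γ, f γ ∂(μs n)) Filter.atTop (nhds (∫ γ, f γ ∂μ))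

open Filter Topology

instance : Fact (0 < 2 * π) := ⟨by positivity⟩
instance : BorelSpace Real.Angle := inferInstanceAs (BorelSpace (AddCircle (2 * π)))
instance : SecondCountableTopology Real.Angle :=
  inferInstanceAs (SecondCountableTopology (AddCircle (2 * π)))

attribute [fun_prop] Real.Angle.continuous_sin Real.Angle.continuous_cos

theorem IsCompact.isClosed_setOf_exists_mem {X Y : Type*} [TopologicalSpace X]
    [TopologicalSpace Y] {K : Set X} (hK : IsCompact K) {C : Set (X × Y)} (hC : IsClosed C) :
    IsClosed {y | ∃ x ∈ K, (x, y) ∈ C} := by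
  have := isCompact_iff_compactSpace.mp hK
  have himage : {y | ∃ x ∈ K, (x, y) ∈ C} =
      Prod.snd '' ((fun q : K × Y => ((q.1 : X), q.2)) ⁻¹' C) := by
    ext y
    constructor
    · rintro ⟨x, hx, hxy⟩
      exact ⟨(⟨x, hx⟩, y), hxy, rfl⟩
    · rintro ⟨⟨x, y⟩, hxy, rfl⟩
      exact ⟨x, x.2, hxy⟩
  rw [himage]
  exact isClosedMap_snd_of_compactSpace _ (hC.preimage (by fun_prop))

theorem mem_lineOf {z : ℝ × ℝ} {γ : LineSpace} :
    z ∈ lineOf γ ↔ z.1 * γ.1.sin - z.2 * γ.1.cos = γ.2 :=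
  Iff.rfl

theorem foot_mem_lineOf (γ : LineSpace) : (γ.2 * γ.1.sin, -(γ.2 * γ.1.cos)) ∈ lineOf γ := by
  rw [mem_lineOf]
  linear_combination γ.2 * Real.Angle.cos_sq_add_sin_sq γ.1

def lineReverse (γ : LineSpace) : LineSpace :=
  (γ.1 + (π : Real.Angle), -γ.2)

theorem continuous_lineReverse : Continuous lineReverse := by
  unfold lineReverse
  fun_prop

theorem lineOf_lineReverse (γ : LineSpace) : lineOf (lineReverse γ) = lineOf γ := by
  ext z
  simp only [mem_lineOf, lineReverse, Real.Angle.sin_add_pi, Real.Angle.cos_add_pi]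
  constructor <;> intro h <;> linarith

/-- The determinant of the linear system defining `lineOf γ₁ ∩ lineOf γ₂`. -/
def lineDet (γ₁ γ₂ : LineSpace) : ℝ :=
  (γ₂.1 - γ₁.1).sin

theorem lineDet_eq (γ₁ γ₂ : LineSpace) :
    lineDet γ₁ γ₂ = γ₁.1.cos * γ₂.1.sin - γ₁.1.sin * γ₂.1.cos := by
  rw [lineDet, sub_eq_add_neg, Real.Angle.sin_add, Real.Angle.sin_neg, Real.Angle.cos_neg]
  ring

theorem continuous_lineDet : Continuous fun x : LineSpace × LineSpace => lineDet x.1 x.2 := by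
  unfold lineDet
  fun_prop

theorem eq_or_eq_lineReverse_of_lineDet_eq_zero {γ₁ γ₂ : LineSpace} (h : lineDet γ₁ γ₂ = 0)
    {z : ℝ × ℝ} (h₁ : z ∈ lineOf γ₁) (h₂ : z ∈ lineOf γ₂) :
    γ₂ = γ₁ ∨ γ₂ = lineReverse γ₁ := by
  rw [mem_lineOf] at h₁ h₂
  rcases Real.Angle.sin_eq_zero_iff.1 h with h0 | hπ
  · have hθ : γ₂.1 = γ₁.1 := sub_eq_zero.1 h0
    rw [hθ] at h₂
    exact Or.inl (Prod.ext hθ (h₂.symm.trans h₁))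
  · have hθ : γ₂.1 = γ₁.1 + π := by rw [← hπ, add_sub_cancel]
    rw [hθ, Real.Angle.sin_add_pi, Real.Angle.cos_add_pi] at h₂
    exact Or.inr (Prod.ext hθ (by simp only [lineReverse]; linarith))

theorem lineOf_eq_lineOf_iff {γ₁ γ₂ : LineSpace} :
    lineOf γ₁ = lineOf γ₂ ↔ γ₂ = γ₁ ∨ γ₂ = lineReverse γ₁ := by
  refine ⟨fun h => ?_, ?_⟩
  · have ha := h ▸ foot_mem_lineOf γ₁
    have hb : (γ₁.2 * γ₁.1.sin + γ₁.1.cos, -(γ₁.2 * γ₁.1.cos) + γ₁.1.sin) ∈ lineOf γ₂ := by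
      rw [← h, mem_lineOf]
      linear_combination γ₁.2 * Real.Angle.cos_sq_add_sin_sq γ₁.1
    refine eq_or_eq_lineReverse_of_lineDet_eq_zero ?_ (foot_mem_lineOf γ₁) ha
    rw [mem_lineOf] at ha hb
    rw [lineDet_eq]
    linear_combination hb - ha
  · rintro (rfl | rfl)
    · rfl
    · exact (lineOf_lineReverse γ₁).symm

/-- The intersection point of two non-parallel lines, by Cramer's rule. -/
def lineInter (γ₁ γ₂ : LineSpace) : ℝ × ℝ :=
  ((γ₁.1.cos * γ₂.2 - γ₂.1.cos * γ₁.2) / lineDet γ₁ γ₂,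
    (γ₁.1.sin * γ₂.2 - γ₂.1.sin * γ₁.2) / lineDet γ₁ γ₂)

theorem lineInter_mem_lineOf {γ₁ γ₂ : LineSpace} (h : lineDet γ₁ γ₂ ≠ 0) :
    lineInter γ₁ γ₂ ∈ lineOf γ₁ ∩ lineOf γ₂ := by
  constructor <;>
  · rw [mem_lineOf, lineInter]
    field_simp
    rw [lineDet_eq]
    ring

theorem lineInter_eq {γ₁ γ₂ : LineSpace} (h : lineDet γ₁ γ₂ ≠ 0) {z : ℝ × ℝ}
    (h₁ : z ∈ lineOf γ₁) (h₂ : z ∈ lineOf γ₂) : lineInter γ₁ γ₂ = z := by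
  rw [mem_lineOf] at h₁ h₂
  rw [lineInter, Prod.ext_iff, div_eq_iff h, div_eq_iff h, lineDet_eq]
  constructor
  · linear_combination γ₂.1.cos * h₁ - γ₁.1.cos * h₂
  · linear_combination γ₂.1.sin * h₁ - γ₁.1.sin * h₂

theorem continuousOn_lineInter :
    ContinuousOn (fun x : LineSpace × LineSpace => lineInter x.1 x.2)
      {x | lineDet x.1 x.2 ≠ 0} := by
  refine ContinuousOn.prodMk ?_ ?_ <;>
  exact (Continuous.continuousOn (by fun_prop)).div continuous_lineDet.continuousOn fun x hx => hx

def sameLinePairs : Set (LineSpace × LineSpace) :=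
  {x | lineOf x.1 = lineOf x.2}

theorem isClosed_sameLinePairs : IsClosed sameLinePairs := by
  have h : sameLinePairs = {x | x.2 = x.1} ∪ {x | x.2 = lineReverse x.1} := by
    ext x
    exact lineOf_eq_lineOf_iff
  rw [h]
  exact (isClosed_eq continuous_snd continuous_fst).union
    (isClosed_eq continuous_snd (continuous_lineReverse.comp continuous_fst))

theorem measure_prod_sameLinePairs {μ : Measure LineSpace} [SFinite μ]
    (hμ : ∀ z, μ (linesMeeting {z}) = 0) : μ.prod μ sameLinePairs = 0 := by
  refine (Measure.measure_prod_null isClosed_sameLinePairs.measurableSet).2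
    (Eventually.of_forall fun γ => ?_)
  show μ (Prod.mk γ ⁻¹' sameLinePairs) = 0
  obtain ⟨z, hz⟩ : (lineOf γ).Nonempty := ⟨_, foot_mem_lineOf γ⟩
  refine measure_mono_null (fun γ' (h : lineOf γ = lineOf γ') => ?_) (hμ z)
  exact ⟨z, h ▸ hz, rfl⟩

def pairsMeetingIn (A : Set (ℝ × ℝ)) : Set (LineSpace × LineSpace) :=
  {x | lineOf x.1 ≠ lineOf x.2 ∧ (lineOf x.1 ∩ lineOf x.2 ∩ A).Nonempty}

theorem lineArea_eq (μ : Measure LineSpace) (A : Set (ℝ × ℝ)) :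
    lineArea μ A = (μ.prod μ (pairsMeetingIn A)).toReal / (8 * π) :=
  rfl

theorem pairsMeetingIn_mono {A B : Set (ℝ × ℝ)} (h : A ⊆ B) :
    pairsMeetingIn A ⊆ pairsMeetingIn B :=
  fun _ ⟨hne, z, hz, hzA⟩ => ⟨hne, z, hz, h hzA⟩

theorem pairsMeetingIn_eq (A : Set (ℝ × ℝ)) :
    pairsMeetingIn A =
      {x | lineDet x.1 x.2 ≠ 0} ∩ (fun x : LineSpace × LineSpace => lineInter x.1 x.2) ⁻¹' A := by
  ext x
  constructor
  · rintro ⟨hne, z, ⟨h₁, h₂⟩, hzA⟩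
    have hdet : lineDet x.1 x.2 ≠ 0 := fun h0 =>
      hne (lineOf_eq_lineOf_iff.2 (eq_or_eq_lineReverse_of_lineDet_eq_zero h0 h₁ h₂))
    exact ⟨hdet, by rwa [Set.mem_preimage, lineInter_eq hdet h₁ h₂]⟩
  · rintro ⟨hdet, hA⟩
    refine ⟨fun h => hdet ?_, _, lineInter_mem_lineOf hdet, hA⟩
    rcases lineOf_eq_lineOf_iff.1 h with h | h <;> simp [h, lineDet, lineReverse]

theorem isOpen_pairsMeetingIn {U : Set (ℝ × ℝ)} (hU : IsOpen U) : IsOpen (pairsMeetingIn U) := by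
  rw [pairsMeetingIn_eq]
  exact continuousOn_lineInter.isOpen_inter_preimage (isOpen_ne_fun continuous_lineDet
    continuous_const) hU

theorem isClosed_incidence : IsClosed {q : (ℝ × ℝ) × LineSpace | q.1 ∈ lineOf q.2} :=
  isClosed_eq (by fun_prop) (by fun_prop)

theorem frontier_pairsMeetingIn_subset {K : Set (ℝ × ℝ)} (hK : IsCompact K) :
    frontier (pairsMeetingIn K) ⊆ sameLinePairs ∪ pairsMeetingIn (frontier K) := by
  intro x hx
  have hclosed : IsClosed {x : LineSpace × LineSpace | ∃ z ∈ K, z ∈ lineOf x.1 ∩ lineOf x.2} :=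
    hK.isClosed_setOf_exists_mem
      ((isClosed_incidence.preimage (f := fun q : (ℝ × ℝ) × (LineSpace × LineSpace) => (q.1, q.2.1)) (by fun_prop)).inter
        (isClosed_incidence.preimage (f := fun q : (ℝ × ℝ) × (LineSpace × LineSpace) => (q.1, q.2.2)) (by fun_prop)))
  obtain ⟨z, hzK, hz⟩ := closure_minimal
    (by rintro y ⟨-, z, hz, hzK⟩; exact ⟨z, hzK, hz⟩) hclosed hx.1
  by_cases hsame : lineOf x.1 = lineOf x.2
  · exact Or.inl hsame
  refine Or.inr ⟨hsame, z, hz, ?_⟩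
  rw [hK.isClosed.frontier_eq]
  refine ⟨hzK, fun hzi => hx.2 ?_⟩
  exact interior_maximal (pairsMeetingIn_mono interior_subset)
    (isOpen_pairsMeetingIn isOpen_interior) ⟨hsame, z, hz, hzi⟩

theorem measure_prod_pairsMeetingIn_of_lineArea_eq_zero {μ : Measure LineSpace}
    [IsFiniteMeasure μ] {A : Set (ℝ × ℝ)} (h : lineArea μ A = 0) :
    μ.prod μ (pairsMeetingIn A) = 0 := by
  rw [lineArea_eq, div_eq_zero_iff, ENNReal.toReal_eq_zero_iff] at h
  rcases h with (h | h) | h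
  · exact h
  · exact absurd h (measure_ne_top _ _)
  · exact absurd h (by positivity)

theorem WeakTendsto.tendsto_prod_apply_of_null_frontier {μs : ℕ → Measure LineSpace}
    {μ : Measure LineSpace} [IsProbabilityMeasure μ] [∀ n, IsProbabilityMeasure (μs n)]
    (h : WeakTendsto μs μ) {E : Set (LineSpace × LineSpace)} (hE : μ.prod μ (frontier E) = 0) :
    Tendsto (fun n => (μs n).prod (μs n) E) atTop (𝓝 (μ.prod μ E)) := by
  let P : ℕ → ProbabilityMeasure LineSpace := fun n => ⟨μs n, inferInstance⟩
  let P₀ : ProbabilityMeasure LineSpace := ⟨μ, inferInstance⟩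
  have hP : Tendsto P atTop (𝓝 P₀) := ProbabilityMeasure.tendsto_iff_forall_integral_tendsto.2 h
  have hPP : Tendsto (fun n => (P n).prod (P n)) atTop (𝓝 (P₀.prod P₀)) :=
    (ProbabilityMeasure.continuous_prod.tendsto (P₀, P₀)).comp (hP.prodMk_nhds hP)
  exact ProbabilityMeasure.tendsto_measure_of_null_frontier_of_tendsto' hPP hE

theorem lineArea_tendsto_general
    (μ : Measure LineSpace) (μs : ℕ → Measure LineSpace)
    [IsProbabilityMeasure μ] [∀ n, IsProbabilityMeasure (μs n)]
    (hμ : Admissible μ)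
    (hconv : WeakTendsto μs μ)
    (K : Set (ℝ × ℝ)) (hK : IsCompact K) (hbd : lineArea μ (frontier K) = 0) :
    Filter.Tendsto (fun n => lineArea (μs n) K) Filter.atTop (nhds (lineArea μ K)) := by
  have hnull : μ.prod μ (frontier (pairsMeetingIn K)) = 0 :=
    measure_mono_null (frontier_pairsMeetingIn_subset hK) (measure_union_null
      (measure_prod_sameLinePairs hμ.2.2) (measure_prod_pairsMeetingIn_of_lineArea_eq_zero hbd))
  simp only [lineArea_eq]
  exact ((ENNReal.tendsto_toReal (measure_ne_top _ _)).comp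
    (hconv.tendsto_prod_apply_of_null_frontier hnull)).div_const _

/-- **Lemma 11.4 of the paper**: if admissible Borel probability measures `μ n` on the
space of lines of the plane converge weakly to an admissible Borel probability measure
`μ`, then for every compact set `K ⊆ ℝ²` whose topological boundary has `μ`-area zero,
the areas `area_{μ n}(K)` converge to `area_μ(K)`. -/
theorem lineArea_tendsto
    (μ : Measure LineSpace) (μs : ℕ → Measure LineSpace)
    [IsProbabilityMeasure μ] [∀ n, IsProbabilityMeasure (μs n)]
    (hμ : Admissible μ) (hμs : ∀ n, Admissible (μs n))
    (hconv : WeakTendsto μs μ)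
    (K : Set (ℝ × ℝ)) (hK : IsCompact K) (hbd : lineArea μ (frontier K) = 0) :
    Filter.Tendsto (fun n => lineArea (μs n) K) Filter.atTop (nhds (lineArea μ K)) :=
  lineArea_tendsto_general μ μs hμ hconv K hK hbd
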